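/- arXiv:1103.2496 — 11 statements merged into one kernel-verified Lean document; each statement's English description precedes it below -/
import Mathlib

section
/- Fix a user i and rates α_{−i} ∈ ℝ_{≥0}^{N−1} of the other users such that the profile obtained by setting α_i = 0 lies in 𝒞. Then the function α_i ↦ u_i(α_i, α_{−i}) attains its maximum over the constrained action set {α_i ∈ [0, C_{{i}}] : (α_i, α_{−i}) ∈ 𝒞} at exactly one point, namely α_i* = max( r_{i,N}, min_{Ω ⊆ {1,…,N}, i ∈ Ω} ( C_Ω − Σ_{k∈Ω, k≠i} α_k ) ); i.e., the best-reply correspondence is a nonempty single-valued function given by this formula. -/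
open scoped Classical

private lemma log_ratio_anti (a σ2 s t : ℝ) (ha : 0 < a) (hσ : 0 < σ2)
    (hs : 0 ≤ s) (hst : s ≤ t) :
    Real.log (σ2 + t + a) - Real.log (σ2 + t) ≤
      Real.log (σ2 + s + a) - Real.log (σ2 + s) := by
  have h1 : 0 < σ2 + s := by linarith
  have h2 : 0 < σ2 + t := by linarith
  have h3 : 0 < σ2 + s + a := by linarith
  have h4 : 0 < σ2 + t + a := by linarith
  rw [sub_le_sub_iff, ← Real.log_mul h4.ne' h1.ne', ← Real.log_mul h3.ne' h2.ne']
  apply Real.log_le_log (by positivity)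
  nlinarith

/-- the best-reply correspondence of user i is a nonempty single-valued
function, given by max(r_{i,N}, min over coalitions Ω ∋ i of (C_Ω - Σ_{k ∈ Ω, k ≠ i} α_k)). -/
theorem best_reply_unique
    (N : ℕ) (hN : 2 ≤ N)
    (P h : Fin N → ℝ) (σ2 : ℝ)
    (hP : ∀ i, 0 < P i) (hh : ∀ i, 0 < h i) (hσ : 0 < σ2)
    (g : Fin N → ℝ → ℝ)
    (hg : ∀ i, StrictMonoOn (g i) (Set.Ici 0))
    (hgpos : ∀ i x, 0 ≤ x → 0 < g i x)
    (C : Finset (Fin N) → ℝ)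
    (hC : ∀ Ω : Finset (Fin N), C Ω = Real.log (1 + (∑ i ∈ Ω, P i * h i) / σ2))
    (𝒞 : Set (Fin N → ℝ))
    (h𝒞 : ∀ α, α ∈ 𝒞 ↔ ((∀ i, 0 ≤ α i) ∧
      ∀ Ω : Finset (Fin N), Ω.Nonempty → ∑ i ∈ Ω, α i ≤ C Ω))
    (u : Fin N → (Fin N → ℝ) → ℝ)
    (hu : ∀ i α, u i α = if α ∈ 𝒞 then g i (α i) else 0)
    (i : Fin N) (α : Fin N → ℝ)
    (hfeas : Function.update α i 0 ∈ 𝒞)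
    (r : ℝ)
    (hr : r = Real.log (1 + P i * h i / (σ2 + ∑ k ∈ Finset.univ.erase i, P k * h k)))
    (S : Set ℝ)
    (hS : S = {x : ℝ | x ∈ Set.Icc 0 (C {i}) ∧ Function.update α i x ∈ 𝒞})
    (br : ℝ)
    (hbr : br = max r ((Finset.univ.filter (fun Ω : Finset (Fin N) => i ∈ Ω)).inf'
      ⟨{i}, by simp⟩ (fun Ω => C Ω - ∑ k ∈ Ω.erase i, α k))) :
    br ∈ S ∧
      (∀ x ∈ S, u i (Function.update α i x) ≤ u i (Function.update α i br)) ∧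
      (∀ x ∈ S, (∀ y ∈ S, u i (Function.update α i y) ≤ u i (Function.update α i x)) →
        x = br) := by
  -- notation
  set F : Finset (Finset (Fin N)) := Finset.univ.filter (fun Ω : Finset (Fin N) => i ∈ Ω) with hF
  have hFne : F.Nonempty := ⟨{i}, by simp [hF]⟩
  set m : ℝ := F.inf' hFne (fun Ω => C Ω - ∑ k ∈ Ω.erase i, α k) with hm
  -- basic positivity of sums
  have hsum_nonneg : ∀ Ω : Finset (Fin N), 0 ≤ ∑ k ∈ Ω, P k * h k := by
    intro Ω
    exact Finset.sum_nonneg fun k _ => le_of_lt (mul_pos (hP k) (hh k))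
  -- rewrite C in log-difference form
  have hC' : ∀ Ω : Finset (Fin N),
      C Ω = Real.log (σ2 + ∑ k ∈ Ω, P k * h k) - Real.log σ2 := by
    intro Ω
    have hs := hsum_nonneg Ω
    have hpos : 0 < σ2 + ∑ k ∈ Ω, P k * h k := by linarith
    rw [hC, one_add_div hσ.ne', Real.log_div hpos.ne' hσ.ne']
  -- rewrite r in log-difference form
  have hT : 0 ≤ ∑ k ∈ Finset.univ.erase i, P k * h k := by
    exact Finset.sum_nonneg fun k _ => le_of_lt (mul_pos (hP k) (hh k))
  have hr' : r = Real.log (σ2 + (∑ k ∈ Finset.univ.erase i, P k * h k) + P i * h i)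
      - Real.log (σ2 + ∑ k ∈ Finset.univ.erase i, P k * h k) := by
    have h1 : (0:ℝ) < σ2 + ∑ k ∈ Finset.univ.erase i, P k * h k := by linarith
    have h2 : (0:ℝ) < σ2 + (∑ k ∈ Finset.univ.erase i, P k * h k) + P i * h i := by
      have := mul_pos (hP i) (hh i); linarith
    rw [hr, one_add_div h1.ne', Real.log_div h2.ne' h1.ne']
  have hrpos : 0 ≤ r := by
    rw [hr]
    apply Real.log_nonneg
    have h1 : 0 < σ2 + ∑ k ∈ Finset.univ.erase i, P k * h k := by linarith
    have h2 : 0 < P i * h i := mul_pos (hP i) (hh i)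
    have := div_nonneg h2.le h1.le
    linarith
  -- facts from feasibility of the zero-profile
  have hfeas' := (h𝒞 _).1 hfeas
  have hα0 : ∀ k, k ≠ i → 0 ≤ α k := by
    intro k hk
    have := hfeas'.1 k
    rwa [Function.update_of_ne hk] at this
  -- sum of updated profile over a coalition
  have hsum_upd : ∀ (x : ℝ) (Ω : Finset (Fin N)), i ∈ Ω →
      ∑ k ∈ Ω, Function.update α i x k = x + ∑ k ∈ Ω.erase i, α k := by
    intro x Ω hiΩ
    rw [← Finset.add_sum_erase _ _ hiΩ, Function.update_self]
    congr 1
    exact Finset.sum_congr rfl fun k hk =>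
      Function.update_of_ne (Finset.ne_of_mem_erase hk) _ _
  have hsum_upd' : ∀ (x : ℝ) (Ω : Finset (Fin N)), i ∉ Ω →
      ∑ k ∈ Ω, Function.update α i x k = ∑ k ∈ Ω, α k := by
    intro x Ω hiΩ
    exact Finset.sum_congr rfl fun k hk =>
      Function.update_of_ne (by rintro rfl; exact hiΩ hk) _ _
  -- coalition sums of others are bounded
  have hcoal : ∀ Ω : Finset (Fin N), ∑ k ∈ Ω.erase i, α k ≤ C (Ω.erase i) := by
    intro Ω
    rcases (Ω.erase i).eq_empty_or_nonempty with he | hne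
    · rw [he]
      simp [hC' ∅]
    · have := hfeas'.2 (Ω.erase i) hne
      rwa [hsum_upd' 0 (Ω.erase i) (Finset.notMem_erase i Ω)] at this
  -- r ≤ each coalition slack, hence r ≤ m
  have hrm : r ≤ m := by
    apply Finset.le_inf'
    intro Ω hΩ
    have hiΩ : i ∈ Ω := by simpa [hF] using hΩ
    have hsplit : ∑ k ∈ Ω, P k * h k
        = (∑ k ∈ Ω.erase i, P k * h k) + P i * h i := by
      rw [← Finset.add_sum_erase _ _ hiΩ]; ring
    have hsub : Ω.erase i ⊆ Finset.univ.erase i :=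
      Finset.erase_subset_erase i (Finset.subset_univ Ω)
    have hle : ∑ k ∈ Ω.erase i, P k * h k ≤ ∑ k ∈ Finset.univ.erase i, P k * h k :=
      Finset.sum_le_sum_of_subset_of_nonneg hsub
        (fun k _ _ => le_of_lt (mul_pos (hP k) (hh k)))
    have hsplit' : σ2 + ∑ k ∈ Ω, P k * h k
        = σ2 + (∑ k ∈ Ω.erase i, P k * h k) + P i * h i := by
      rw [hsplit]; ring
    have hkey : r ≤ C Ω - C (Ω.erase i) := by
      rw [hr', hC' Ω, hC' (Ω.erase i), hsplit']
      have := log_ratio_anti (P i * h i) σ2 (∑ k ∈ Ω.erase i, P k * h k)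
        (∑ k ∈ Finset.univ.erase i, P k * h k)
        (mul_pos (hP i) (hh i)) hσ (hsum_nonneg _) hle
      linarith
    have := hcoal Ω
    linarith
  have hbrm : br = m := by rw [hbr]; exact max_eq_right hrm
  have hbrpos : 0 ≤ br := hbrm ▸ le_trans hrpos hrm
  -- br is bounded by every coalition slack
  have hbr_le : ∀ Ω : Finset (Fin N), i ∈ Ω → br ≤ C Ω - ∑ k ∈ Ω.erase i, α k := by
    intro Ω hiΩ
    rw [hbrm]
    exact Finset.inf'_le _ (by simp [hF, hiΩ])
  -- br ∈ S
  have hbrfeas : Function.update α i br ∈ 𝒞 := by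
    rw [h𝒞]
    constructor
    · intro k
      by_cases hk : k = i
      · subst hk; rw [Function.update_self]; exact hbrpos
      · rw [Function.update_of_ne hk]; exact hα0 k hk
    · intro Ω hne
      by_cases hiΩ : i ∈ Ω
      · rw [hsum_upd br Ω hiΩ]
        have := hbr_le Ω hiΩ
        linarith
      · rw [hsum_upd' br Ω hiΩ]
        have := hfeas'.2 Ω hne
        rw [hsum_upd' 0 Ω hiΩ] at this
        exact this
  have hbrS : br ∈ S := by
    rw [hS]
    refine ⟨⟨hbrpos, ?_⟩, hbrfeas⟩
    have := hbr_le {i} (Finset.mem_singleton_self i)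
    simpa using this
  -- every x ∈ S satisfies x ≤ br and x ≥ 0, with u = g
  have hxS : ∀ x ∈ S, 0 ≤ x ∧ x ≤ br ∧ u i (Function.update α i x) = g i x := by
    intro x hx
    rw [hS] at hx
    obtain ⟨⟨hx0, _⟩, hxfeas⟩ := hx
    refine ⟨hx0, ?_, ?_⟩
    · rw [hbrm]
      apply Finset.le_inf'
      intro Ω hΩ
      have hiΩ : i ∈ Ω := by simpa [hF] using hΩ
      have := ((h𝒞 _).1 hxfeas).2 Ω ⟨i, hiΩ⟩
      rw [hsum_upd x Ω hiΩ] at this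
      linarith
    · rw [hu, if_pos hxfeas, Function.update_self]
  have hubr : u i (Function.update α i br) = g i br := by
    rw [hu, if_pos hbrfeas, Function.update_self]
  refine ⟨hbrS, ?_, ?_⟩
  · intro x hx
    obtain ⟨hx0, hxbr, hux⟩ := hxS x hx
    rw [hux, hubr]
    exact (hg i).monotoneOn hx0 hbrpos hxbr
  · intro x hx hmax
    obtain ⟨hx0, hxbr, hux⟩ := hxS x hx
    by_contra hne
    have hlt : x < br := lt_of_le_of_ne hxbr hne
    have := hmax br hbrS
    rw [hux, hubr] at this
    exact absurd this (not_le.mpr ((hg i) hx0 hbrpos hlt))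
end

section
/- The set of pure Nash equilibria of the constrained rate allocation game equals the maximal face of the capacity region, i.e., a profile α ∈ 𝒞 is a pure Nash equilibrium if and only if Σ_{i=1}^N α_i = C_N. -/
open scoped Classical

/-!
A Nash equilibrium leaves no user room to raise its own rate, so every user lies in a *tight* set
`Ω`, one with `∑_{i ∈ Ω} α_i = C_Ω`. Writing `C_Ω = log (1 + ∑_{i ∈ Ω} w_i)` with
`w_i = P_i h_i / σ² ≥ 0` shows that `C` is submodular, and for a point of the capacity region
submodularity makes tight sets closed under unions; hence `{1, …, N}` itself is tight. Conversely,
on the maximal face any admissible deviation of user `i` can only lower `α_i`.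
-/

open Finset Function Real Topology

section Submodular

variable {ι : Type*} [DecidableEq ι]

def Submodular (f : Finset ι → ℝ) : Prop :=
  ∀ s t, f (s ∪ t) + f (s ∩ t) ≤ f s + f t

theorem Real.log_add_log_le_of_add_eq {a b c d : ℝ} (hb : 0 < b) (hbc : b ≤ c) (hbd : b ≤ d)
    (h : a + b = c + d) : log a + log b ≤ log c + log d := by
  have ha : 0 < a := by linarith
  rw [← log_mul ha.ne' hb.ne', ← log_mul (hb.trans_le hbc).ne' (hb.trans_le hbd).ne']
  -- `c * d - a * b = (c - b) * (d - b)`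
  exact log_le_log (by positivity) (by nlinarith [mul_nonneg (sub_nonneg.2 hbc) (sub_nonneg.2 hbd)])

theorem submodular_log_add_sum {c : ℝ} (hc : 0 < c) {w : ι → ℝ} (hw : ∀ i, 0 ≤ w i) :
    Submodular fun s => log (c + ∑ i ∈ s, w i) := by
  intro s t
  have hmono {u v : Finset ι} (huv : u ⊆ v) : c + ∑ i ∈ u, w i ≤ c + ∑ i ∈ v, w i := by
    gcongr
    exact fun i _ _ => hw i
  refine log_add_log_le_of_add_eq ?_ (hmono inter_subset_left) (hmono inter_subset_right) ?_
  · linarith [sum_nonneg fun i (_ : i ∈ s ∩ t) => hw i]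
  · linarith [sum_union_inter (s₁ := s) (s₂ := t) (f := w)]

variable {f : Finset ι → ℝ} {α : ι → ℝ}

theorem sum_union_eq_of_sum_eq (hf : Submodular f) (hα : ∀ s, ∑ i ∈ s, α i ≤ f s)
    {s t : Finset ι} (hs : ∑ i ∈ s, α i = f s) (ht : ∑ i ∈ t, α i = f t) :
    ∑ i ∈ s ∪ t, α i = f (s ∪ t) := by
  linarith [hf s t, hα (s ∪ t), hα (s ∩ t), sum_union_inter (s₁ := s) (s₂ := t) (f := α)]

theorem sum_univ_eq_of_forall_exists_sum_eq [Fintype ι] (hf : Submodular f)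
    (hα : ∀ s, ∑ i ∈ s, α i ≤ f s) (hempty : f ∅ = 0)
    (htight : ∀ i, ∃ s, i ∈ s ∧ ∑ j ∈ s, α j = f s) :
    ∑ i, α i = f univ := by
  choose s hmem hs using htight
  have hbiUnion (u : Finset ι) : ∑ i ∈ u.biUnion s, α i = f (u.biUnion s) := by
    induction u using Finset.induction_on with
    | empty => simp [hempty]
    | insert a u _ ih => rw [biUnion_insert]; exact sum_union_eq_of_sum_eq hf hα (hs a) ih
  have huniv : univ.biUnion s = univ :=
    eq_univ_of_forall fun i => mem_biUnion.2 ⟨i, mem_univ i, hmem i⟩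
  simpa [huniv] using hbiUnion univ

end Submodular

section Update

variable {ι M : Type*} [DecidableEq ι]

theorem Finset.sum_update_of_mem_eq_sum_add_sub [AddCommGroup M] {s : Finset ι} {i : ι}
    (hi : i ∈ s) (f : ι → M) (b : M) :
    ∑ j ∈ s, update f i b j = ∑ j ∈ s, f j + (b - f i) := by
  rw [sum_update_of_mem hi, sum_eq_sum_sdiff_singleton_add hi]
  abel

theorem exists_update_gt_of_sum_lt [Fintype ι] {f : Finset ι → ℝ} {α : ι → ℝ}
    (hα : ∀ s, ∑ j ∈ s, α j ≤ f s) {i : ι} (hslack : ∀ s, i ∈ s → ∑ j ∈ s, α j < f s) :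
    ∃ x > α i, ∀ s, ∑ j ∈ s, update α i x j ≤ f s := by
  have hev (s : Finset ι) : ∀ᶠ x in 𝓝 (α i), ∑ j ∈ s, update α i x j ≤ f s := by
    by_cases hi : i ∈ s
    · have hlt : α i < α i + (f s - ∑ j ∈ s, α j) := by linarith [hslack s hi]
      filter_upwards [eventually_lt_nhds hlt] with x hx
      rw [sum_update_of_mem_eq_sum_add_sub hi]
      linarith
    · exact .of_forall fun x => (sum_update_of_notMem hi α x).trans_le (hα s)
  obtain ⟨x, hx, hxi⟩ := ((Filter.eventually_all.2 hev).filter_mono nhdsWithin_le_nhds).and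
    (self_mem_nhdsWithin (s := Set.Ioi (α i))) |>.exists
  exact ⟨x, hxi, hx⟩

end Update

theorem pure_nash_iff_maximal_face_general
    (N : ℕ)
    (P h : Fin N → ℝ) (σ2 : ℝ)
    (hP : ∀ i, 0 < P i) (hh : ∀ i, 0 < h i) (hσ : 0 < σ2)
    (g : Fin N → ℝ → ℝ)
    (hg : ∀ i, StrictMonoOn (g i) (Set.Ici 0))
    (C : Finset (Fin N) → ℝ)
    (hC : ∀ Ω : Finset (Fin N), C Ω = Real.log (1 + (∑ i ∈ Ω, P i * h i) / σ2))
    (𝒞 : Set (Fin N → ℝ))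
    (h𝒞 : ∀ α, α ∈ 𝒞 ↔ ((∀ i, 0 ≤ α i) ∧
      ∀ Ω : Finset (Fin N), Ω.Nonempty → ∑ i ∈ Ω, α i ≤ C Ω))
    (u : Fin N → (Fin N → ℝ) → ℝ)
    (hu : ∀ i α, u i α = if α ∈ 𝒞 then g i (α i) else 0)
    (α : Fin N → ℝ) (hα : α ∈ 𝒞) :
    (∀ i : Fin N, ∀ x : ℝ, 0 ≤ x → Function.update α i x ∈ 𝒞 →
        u i (Function.update α i x) ≤ u i α)
      ↔ ∑ i, α i = C Finset.univ := by
  have hempty : C ∅ = 0 := by simp [hC]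
  have hsub : Submodular C := by
    have hC' : C = fun Ω => log (1 + ∑ i ∈ Ω, P i * h i / σ2) :=
      funext fun Ω => by rw [hC, sum_div]
    exact hC' ▸ submodular_log_add_sum one_pos fun i => div_nonneg (mul_pos (hP i) (hh i)).le hσ.le
  have h𝒞' (β : Fin N → ℝ) : β ∈ 𝒞 ↔ (∀ i, 0 ≤ β i) ∧ ∀ Ω, ∑ i ∈ Ω, β i ≤ C Ω := by
    refine (h𝒞 β).trans (and_congr_right fun _ => ⟨fun hβ Ω => ?_, fun hβ Ω _ => hβ Ω⟩)
    rcases Ω.eq_empty_or_nonempty with rfl | hΩ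
    exacts [by simp [hempty], hβ Ω hΩ]
  obtain ⟨hα0, hαC⟩ := (h𝒞' α).1 hα
  have hpayoff {i : Fin N} {x : ℝ} (hx : update α i x ∈ 𝒞) :
      u i (update α i x) ≤ u i α ↔ g i x ≤ g i (α i) := by
    rw [hu, hu, if_pos hx, if_pos hα, update_self]
  constructor
  · intro hnash
    refine sum_univ_eq_of_forall_exists_sum_eq hsub hαC hempty fun i => ?_
    by_contra! hslack
    obtain ⟨x, hxi, hxC⟩ :=
      exists_update_gt_of_sum_lt hαC fun s hs => (hαC s).lt_of_ne (hslack s hs)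
    have hx0 : 0 ≤ x := (hα0 i).trans hxi.le
    have hx : update α i x ∈ 𝒞 :=
      (h𝒞' _).2 ⟨fun j => by rw [update_apply]; split_ifs <;> simp [hx0, hα0], hxC⟩
    exact ((hpayoff hx).1 (hnash i x hx0 hx)).not_gt (hg i (hα0 i) hx0 hxi)
  · intro hsum i x hx0 hx
    have hxi : x ≤ α i := by
      have := ((h𝒞' _).1 hx).2 univ
      rw [sum_update_of_mem_eq_sum_add_sub (mem_univ i)] at this
      linarith
    exact (hpayoff hx).2 ((hg i).monotoneOn hx0 (hα0 i) hxi)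

/-- In the single-receiver constrained rate allocation game, a profile
`α ∈ 𝒞` is a pure Nash equilibrium iff `∑ i, α i = C_N` (the maximal face). -/
theorem pure_nash_iff_maximal_face
    (N : ℕ) (hN : 2 ≤ N)
    (P h : Fin N → ℝ) (σ2 : ℝ)
    (hP : ∀ i, 0 < P i) (hh : ∀ i, 0 < h i) (hσ : 0 < σ2)
    (g : Fin N → ℝ → ℝ)
    (hg : ∀ i, StrictMonoOn (g i) (Set.Ici 0))
    (hgpos : ∀ i x, 0 ≤ x → 0 < g i x)
    (C : Finset (Fin N) → ℝ)
    (hC : ∀ Ω : Finset (Fin N), C Ω = Real.log (1 + (∑ i ∈ Ω, P i * h i) / σ2))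
    (𝒞 : Set (Fin N → ℝ))
    (h𝒞 : ∀ α, α ∈ 𝒞 ↔ ((∀ i, 0 ≤ α i) ∧
      ∀ Ω : Finset (Fin N), Ω.Nonempty → ∑ i ∈ Ω, α i ≤ C Ω))
    (u : Fin N → (Fin N → ℝ) → ℝ)
    (hu : ∀ i α, u i α = if α ∈ 𝒞 then g i (α i) else 0)
    (α : Fin N → ℝ) (hα : α ∈ 𝒞) :
    (∀ i : Fin N, ∀ x : ℝ, 0 ≤ x → Function.update α i x ∈ 𝒞 →
        u i (Function.update α i x) ≤ u i α)
      ↔ ∑ i, α i = C Finset.univ :=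
  pure_nash_iff_maximal_face_general N P h σ2 hP hh hσ g hg C hC 𝒞 h𝒞 u hu α hα
end

section
/- The set of pure Nash equilibria of the constrained rate allocation game is a convex subset of the capacity region 𝒞. -/
/-
A user can always raise its rate until some constraint containing it becomes tight, so, `g i`
being strictly increasing, a profile in 𝒞 is an equilibrium iff every user lies in a tight set
`Ω` (one with `∑_{i ∈ Ω} α_i = C_Ω`). The capacity `Ω ↦ log (1 + ∑_{i ∈ Ω} P_i h_i / σ²)` is
submodular, and for a point of 𝒞 submodularity makes the union of two tight sets tight. Hence the
equilibria are exactly the points of 𝒞 with `∑_i α_i = C_N`: the intersection of the convex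
polytope 𝒞 with a hyperplane.
-/

open Finset Function Filter Topology

variable {ι : Type*}

def IsSubmodular [DecidableEq ι] (C : Finset ι → ℝ) : Prop :=
  ∀ A B, C (A ∪ B) + C (A ∩ B) ≤ C A + C B

def polymatroid (C : Finset ι → ℝ) : Set (ι → ℝ) :=
  {α | (∀ i, 0 ≤ α i) ∧ ∀ Ω : Finset ι, Ω.Nonempty → ∑ i ∈ Ω, α i ≤ C Ω}

theorem log_one_add_add_sub_add_log_one_add_le {a b r : ℝ} (hr : 0 ≤ r) (hra : r ≤ a)
    (hrb : r ≤ b) :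
    Real.log (1 + (a + b - r)) + Real.log (1 + r) ≤ Real.log (1 + a) + Real.log (1 + b) := by
  rw [← Real.log_mul (by linarith) (by linarith), ← Real.log_mul (by linarith) (by linarith)]
  exact Real.log_le_log (by nlinarith)
    (by nlinarith [mul_nonneg (sub_nonneg.2 hra) (sub_nonneg.2 hrb)])

theorem isSubmodular_log_one_add_sum_div [DecidableEq ι] {w : ι → ℝ} (hw : ∀ i, 0 ≤ w i)
    {σ : ℝ} (hσ : 0 < σ) :
    IsSubmodular fun Ω : Finset ι => Real.log (1 + (∑ i ∈ Ω, w i) / σ) := by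
  intro A B
  have hunion : ∑ i ∈ A ∪ B, w i = ∑ i ∈ A, w i + ∑ i ∈ B, w i - ∑ i ∈ A ∩ B, w i := by
    linarith [sum_union_inter (s₁ := A) (s₂ := B) (f := w)]
  have hmono {S T : Finset ι} (hST : S ⊆ T) : (∑ i ∈ S, w i) / σ ≤ (∑ i ∈ T, w i) / σ :=
    div_le_div_of_nonneg_right (sum_le_sum_of_subset_of_nonneg hST fun i _ _ => hw i) hσ.le
  dsimp only
  rw [hunion, sub_div, add_div]
  exact log_one_add_add_sub_add_log_one_add_le (div_nonneg (sum_nonneg fun i _ => hw i) hσ.le)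
    (hmono inter_subset_left) (hmono inter_subset_right)

namespace polymatroid

variable {C : Finset ι → ℝ} {α : ι → ℝ}

theorem convex (C : Finset ι → ℝ) : Convex ℝ (polymatroid C) := by
  rintro α ⟨hα0, hαC⟩ β ⟨hβ0, hβC⟩ a b ha hb hab
  refine ⟨fun i => ?_, fun Ω hΩ => ?_⟩
  · have := hα0 i
    have := hβ0 i
    simp only [Pi.add_apply, Pi.smul_apply, smul_eq_mul]
    positivity
  · simp only [Pi.add_apply, Pi.smul_apply, smul_eq_mul, sum_add_distrib, ← mul_sum]
    calc a * ∑ i ∈ Ω, α i + b * ∑ i ∈ Ω, β i ≤ a * C Ω + b * C Ω := by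
          gcongr
          exacts [hαC Ω hΩ, hβC Ω hΩ]
      _ = C Ω := by rw [← add_mul, hab, one_mul]

theorem sum_le (hC0 : 0 ≤ C ∅) (hα : α ∈ polymatroid C) (Ω : Finset ι) :
    ∑ i ∈ Ω, α i ≤ C Ω := by
  rcases Ω.eq_empty_or_nonempty with rfl | hΩ
  · simpa using hC0
  · exact hα.2 Ω hΩ

theorem sum_union_eq [DecidableEq ι] (hC : IsSubmodular C) (hC0 : 0 ≤ C ∅)
    (hα : α ∈ polymatroid C) {A B : Finset ι} (hA : ∑ i ∈ A, α i = C A)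
    (hB : ∑ i ∈ B, α i = C B) : ∑ i ∈ A ∪ B, α i = C (A ∪ B) := by
  linarith [sum_union_inter (s₁ := A) (s₂ := B) (f := α), hC A B,
    sum_le hC0 hα (A ∪ B), sum_le hC0 hα (A ∩ B)]

theorem sum_univ_eq [Fintype ι] [DecidableEq ι] (hC : IsSubmodular C) (hC0 : C ∅ = 0)
    (hα : α ∈ polymatroid C) (htight : ∀ i, ∃ Ω, i ∈ Ω ∧ ∑ j ∈ Ω, α j = C Ω) :
    ∑ i, α i = C univ := by
  choose Ω hmem hΩ using htight
  have hsup : ∑ j ∈ univ.sup Ω, α j = C (univ.sup Ω) :=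
    sup_induction (p := fun T => ∑ j ∈ T, α j = C T) (by simp [hC0])
      (fun A hA B hB => sum_union_eq hC hC0.ge hα hA hB) fun i _ => hΩ i
  rwa [eq_univ_of_forall fun i => mem_sup.2 ⟨i, mem_univ i, hmem i⟩] at hsup

theorem le_of_update_mem [DecidableEq ι] {Ω : Finset ι} {i : ι} (hi : i ∈ Ω)
    (hΩ : ∑ j ∈ Ω, α j = C Ω) {x : ℝ} (hx : update α i x ∈ polymatroid C) : x ≤ α i := by
  have hle := hx.2 Ω ⟨i, hi⟩
  rw [sum_update_of_mem hi, sdiff_singleton_eq_erase] at hle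
  linarith [add_sum_erase Ω α hi]

theorem update_add_mem [DecidableEq ι] (hα : α ∈ polymatroid C) {i : ι} {ε : ℝ}
    (hε : 0 ≤ ε) (hslack : ∀ Ω, i ∈ Ω → ∑ j ∈ Ω, α j + ε ≤ C Ω) :
    update α i (α i + ε) ∈ polymatroid C := by
  refine ⟨fun j => ?_, fun Ω hΩ => ?_⟩
  · rcases eq_or_ne j i with rfl | hj
    · simpa using add_nonneg (hα.1 j) hε
    · simpa [hj] using hα.1 j
  · by_cases hi : i ∈ Ω
    · rw [sum_update_of_mem hi, sdiff_singleton_eq_erase]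
      linarith [add_sum_erase Ω α hi, hslack Ω hi]
    · rw [sum_update_of_notMem hi]
      exact hα.2 Ω hΩ

theorem exists_mem_sum_eq [Fintype ι] [DecidableEq ι] (hα : α ∈ polymatroid C) {i : ι}
    (hmax : ∀ x, 0 ≤ x → update α i x ∈ polymatroid C → x ≤ α i) :
    ∃ Ω, i ∈ Ω ∧ ∑ j ∈ Ω, α j = C Ω := by
  by_contra! hslack
  -- there are finitely many constraints through `i`, each with positive slack
  have hsmall : ∀ Ω, ∀ᶠ ε in 𝓝[>] (0 : ℝ), i ∈ Ω → ∑ j ∈ Ω, α j + ε ≤ C Ω := fun Ω =>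
    eventually_imp_distrib_left.2 fun hi =>
      nhdsWithin_le_nhds <| (eventually_le_nhds <| sub_pos.2 <|
        (hα.2 Ω ⟨i, hi⟩).lt_of_ne (hslack Ω hi)).mono fun ε hε => by linarith
  obtain ⟨ε, hεC, hε⟩ := ((eventually_all.2 hsmall).and self_mem_nhdsWithin).exists
  linarith [hmax _ (add_nonneg (hα.1 i) hε.le) (update_add_mem hα hε.le hεC)]

theorem forall_update_le_iff [Fintype ι] [DecidableEq ι] (hC : IsSubmodular C) (hC0 : C ∅ = 0)
    (hα : α ∈ polymatroid C) :
    (∀ i x, 0 ≤ x → update α i x ∈ polymatroid C → x ≤ α i) ↔ ∑ i, α i = C univ :=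
  ⟨fun hmax => sum_univ_eq hC hC0 hα fun i => exists_mem_sum_eq hα (hmax i),
    fun htight i _ _ hx => le_of_update_mem (mem_univ i) htight hx⟩

end polymatroid

theorem convex_setOf_sum_eq [Fintype ι] (c : ℝ) : Convex ℝ {α : ι → ℝ | ∑ i, α i = c} :=
  convex_hyperplane ⟨fun α β => sum_add_distrib, fun a α => by simp [mul_sum]⟩ c

open scoped Classical

theorem pure_nash_set_convex_general
    (N : ℕ)
    (P h : Fin N → ℝ) (σ2 : ℝ)
    (hP : ∀ i, 0 < P i) (hh : ∀ i, 0 < h i) (hσ : 0 < σ2)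
    (g : Fin N → ℝ → ℝ)
    (hg : ∀ i, StrictMonoOn (g i) (Set.Ici 0))
    (C : Finset (Fin N) → ℝ)
    (hC : ∀ Ω : Finset (Fin N), C Ω = Real.log (1 + (∑ i ∈ Ω, P i * h i) / σ2))
    (𝒞 : Set (Fin N → ℝ))
    (h𝒞 : ∀ α, α ∈ 𝒞 ↔ ((∀ i, 0 ≤ α i) ∧
      ∀ Ω : Finset (Fin N), Ω.Nonempty → ∑ i ∈ Ω, α i ≤ C Ω))
    (u : Fin N → (Fin N → ℝ) → ℝ)
    (hu : ∀ i α, u i α = if α ∈ 𝒞 then g i (α i) else 0)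
    :
    Convex ℝ {α : Fin N → ℝ | α ∈ 𝒞 ∧
        ∀ i : Fin N, ∀ x : ℝ, 0 ≤ x → Function.update α i x ∈ 𝒞 →
          u i (Function.update α i x) ≤ u i α} ∧
      {α : Fin N → ℝ | α ∈ 𝒞 ∧
        ∀ i : Fin N, ∀ x : ℝ, 0 ≤ x → Function.update α i x ∈ 𝒞 →
          u i (Function.update α i x) ≤ u i α} ⊆ 𝒞 := by
  obtain rfl : 𝒞 = polymatroid C := Set.ext h𝒞
  have hsub : IsSubmodular C := funext hC ▸
    isSubmodular_log_one_add_sum_div (fun i => (mul_pos (hP i) (hh i)).le) hσ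
  have hC0 : C ∅ = 0 := by simp [hC]
  have hnash : {α : Fin N → ℝ | α ∈ polymatroid C ∧
      ∀ i : Fin N, ∀ x : ℝ, 0 ≤ x → update α i x ∈ polymatroid C →
        u i (update α i x) ≤ u i α} = polymatroid C ∩ {α | ∑ i, α i = C univ} := by
    ext α
    refine and_congr_right fun hα => ?_
    rw [Set.mem_ofPred_eq, ← polymatroid.forall_update_le_iff hsub hC0 hα]
    refine forall₂_congr fun i x => forall₂_congr fun hx hupd => ?_
    rw [hu, hu, if_pos hupd, if_pos hα, update_self]
    exact (hg i).le_iff_le hx (hα.1 i)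
  rw [hnash]
  exact ⟨(polymatroid.convex C).inter (convex_setOf_sum_eq _), Set.inter_subset_left⟩

/-- the set of pure Nash equilibria of the constrained rate allocation
game is a convex subset of the capacity region 𝒞. -/
theorem pure_nash_set_convex
    (N : ℕ) (hN : 2 ≤ N)
    (P h : Fin N → ℝ) (σ2 : ℝ)
    (hP : ∀ i, 0 < P i) (hh : ∀ i, 0 < h i) (hσ : 0 < σ2)
    (g : Fin N → ℝ → ℝ)
    (hg : ∀ i, StrictMonoOn (g i) (Set.Ici 0))
    (hgpos : ∀ i x, 0 ≤ x → 0 < g i x)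
    (C : Finset (Fin N) → ℝ)
    (hC : ∀ Ω : Finset (Fin N), C Ω = Real.log (1 + (∑ i ∈ Ω, P i * h i) / σ2))
    (𝒞 : Set (Fin N → ℝ))
    (h𝒞 : ∀ α, α ∈ 𝒞 ↔ ((∀ i, 0 ≤ α i) ∧
      ∀ Ω : Finset (Fin N), Ω.Nonempty → ∑ i ∈ Ω, α i ≤ C Ω))
    (u : Fin N → (Fin N → ℝ) → ℝ)
    (hu : ∀ i α, u i α = if α ∈ 𝒞 then g i (α i) else 0)
    :
    Convex ℝ {α : Fin N → ℝ | α ∈ 𝒞 ∧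
        ∀ i : Fin N, ∀ x : ℝ, 0 ≤ x → Function.update α i x ∈ 𝒞 →
          u i (Function.update α i x) ≤ u i α} ∧
      {α : Fin N → ℝ | α ∈ 𝒞 ∧
        ∀ i : Fin N, ∀ x : ℝ, 0 ≤ x → Function.update α i x ∈ 𝒞 →
          u i (Function.update α i x) ≤ u i α} ⊆ 𝒞 :=
  pure_nash_set_convex_general N P h σ2 hP hh hσ g hg C hC 𝒞 h𝒞 u hu
end

section
/- Every rate profile on the maximal face of the capacity region is a constrained strong equilibrium: if α ∈ 𝒞 satisfies Σ_{i=1}^N α_i = C_N, then for every nonempty coalition D ⊆ {1,…,N} and every deviation α' ∈ 𝒞 with α'_k = α_k for all k ∉ D, there exists a member i ∈ D with u_i(α') ≤ u_i(α); i.e., no coalition of any size can make all of its members strictly better off by a simultaneous feasible deviation. -/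
open scoped Classical

/-- every rate profile on the maximal face of the capacity region is
a constrained strong equilibrium: no coalition can make all its members strictly
better off by a simultaneous feasible deviation. -/
theorem maximal_face_strong_equilibrium
    (N : ℕ) (hN : 2 ≤ N)
    (P h : Fin N → ℝ) (σ2 : ℝ)
    (hP : ∀ i, 0 < P i) (hh : ∀ i, 0 < h i) (hσ : 0 < σ2)
    (g : Fin N → ℝ → ℝ)
    (hg : ∀ i, StrictMonoOn (g i) (Set.Ici 0))
    (hgpos : ∀ i x, 0 ≤ x → 0 < g i x)
    (C : Finset (Fin N) → ℝ)
    (hC : ∀ Ω : Finset (Fin N), C Ω = Real.log (1 + (∑ i ∈ Ω, P i * h i) / σ2))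
    (𝒞 : Set (Fin N → ℝ))
    (h𝒞 : ∀ α, α ∈ 𝒞 ↔ ((∀ i, 0 ≤ α i) ∧
      ∀ Ω : Finset (Fin N), Ω.Nonempty → ∑ i ∈ Ω, α i ≤ C Ω))
    (u : Fin N → (Fin N → ℝ) → ℝ)
    (hu : ∀ i α, u i α = if α ∈ 𝒞 then g i (α i) else 0)
    (α : Fin N → ℝ) (hα : α ∈ 𝒞)
    (hsum : ∑ i, α i = C Finset.univ) :
    ∀ D : Finset (Fin N), D.Nonempty →
      ∀ α' ∈ 𝒞, (∀ k ∉ D, α' k = α k) → ∃ i ∈ D, u i α' ≤ u i α := by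
  intro D hD α' hα' hfix
  by_contra hcon
  push_neg at hcon
  -- each member of D has strictly larger rate under α'
  have hα0 := (h𝒞 α).1 hα
  have hα'0 := (h𝒞 α').1 hα'
  have hlt : ∀ i ∈ D, α i < α' i := by
    intro i hi
    have := hcon i hi
    rw [hu, hu, if_pos hα', if_pos hα] at this
    by_contra hle
    push_neg at hle
    exact absurd ((hg i).le_iff_le (hα'0.1 i) (hα0.1 i) |>.mpr hle) (not_le.mpr this)
  have hsum' : ∑ i, α' i ≤ C Finset.univ := by
    have := (h𝒞 α').1 hα'
    exact this.2 Finset.univ (Finset.univ_nonempty_iff.mpr (Fin.pos_iff_nonempty.mp (by omega)))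
  have hgt : ∑ i, α i < ∑ i, α' i := by
    obtain ⟨j, hj⟩ := hD
    apply Finset.sum_lt_sum
    · intro i _
      by_cases hiD : i ∈ D
      · exact (hlt i hiD).le
      · exact (hfix i hiD).ge
    · exact ⟨j, Finset.mem_univ j, hlt j hj⟩
  linarith [hsum ▸ hgt]
end

section
/- In the constrained rate allocation game, pure Nash equilibria and constrained strong equilibria coincide: a profile α ∈ 𝒞 is a pure Nash equilibrium if and only if it is a constrained strong equilibrium. -/
open scoped Classical

/-- in the constrained rate allocation game, pure Nash equilibria and
constrained strong equilibria coincide. -/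
theorem nash_iff_strong
    (N : ℕ) (hN : 2 ≤ N)
    (P h : Fin N → ℝ) (σ2 : ℝ)
    (hP : ∀ i, 0 < P i) (hh : ∀ i, 0 < h i) (hσ : 0 < σ2)
    (g : Fin N → ℝ → ℝ)
    (hg : ∀ i, StrictMonoOn (g i) (Set.Ici 0))
    (hgpos : ∀ i x, 0 ≤ x → 0 < g i x)
    (C : Finset (Fin N) → ℝ)
    (hC : ∀ Ω : Finset (Fin N), C Ω = Real.log (1 + (∑ i ∈ Ω, P i * h i) / σ2))
    (𝒞 : Set (Fin N → ℝ))
    (h𝒞 : ∀ α, α ∈ 𝒞 ↔ ((∀ i, 0 ≤ α i) ∧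
      ∀ Ω : Finset (Fin N), Ω.Nonempty → ∑ i ∈ Ω, α i ≤ C Ω))
    (u : Fin N → (Fin N → ℝ) → ℝ)
    (hu : ∀ i α, u i α = if α ∈ 𝒞 then g i (α i) else 0)
    (α : Fin N → ℝ) (hα : α ∈ 𝒞) :
    (∀ i : Fin N, ∀ x : ℝ, 0 ≤ x → Function.update α i x ∈ 𝒞 →
        u i (Function.update α i x) ≤ u i α)
      ↔ (∀ D : Finset (Fin N), D.Nonempty →
          ∀ α' ∈ 𝒞, (∀ k ∉ D, α' k = α k) → ∃ i ∈ D, u i α' ≤ u i α) := by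
  obtain ⟨hα0, hαC⟩ := (h𝒞 α).1 hα
  constructor
  · intro hnash D hD α' hα' hfix
    by_contra hcon
    push_neg at hcon
    obtain ⟨hα'0, hα'C⟩ := (h𝒞 α').1 hα'
    have hle : ∀ j, α j ≤ α' j := by
      intro j
      by_cases hj : j ∈ D
      · have hlt := hcon j hj
        rw [hu, hu, if_pos hα, if_pos hα'] at hlt
        exact le_of_lt (((hg j).lt_iff_lt (Set.mem_Ici.2 (hα0 j))
          (Set.mem_Ici.2 (hα'0 j))).1 hlt)
      · exact (hfix j hj).ge
    obtain ⟨i, hi⟩ := hD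
    have hmem : Function.update α i (α' i) ∈ 𝒞 := by
      rw [h𝒞]
      refine ⟨fun j => ?_, fun Ω hΩ => ?_⟩
      · by_cases hj : j = i
        · subst hj; rw [Function.update_self]; exact hα'0 j
        · rw [Function.update_of_ne hj]; exact hα0 j
      · calc ∑ j ∈ Ω, Function.update α i (α' i) j ≤ ∑ j ∈ Ω, α' j := by
              refine Finset.sum_le_sum fun j _ => ?_
              by_cases hj : j = i
              · subst hj; rw [Function.update_self]
              · rw [Function.update_of_ne hj]; exact hle j
          _ ≤ C Ω := hα'C Ω hΩ
    have h1 := hnash i (α' i) (hα'0 i) hmem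
    rw [hu, hu, if_pos hmem, if_pos hα, Function.update_self] at h1
    have h2 := hcon i hi
    rw [hu, hu, if_pos hα, if_pos hα'] at h2
    linarith
  · intro hstrong i x hx hmem
    obtain ⟨j, hj, hle⟩ := hstrong {i} ⟨i, Finset.mem_singleton_self i⟩
      (Function.update α i x) hmem
      (fun k hk => Function.update_of_ne (by simpa using hk) x α)
    rw [Finset.mem_singleton] at hj
    subst hj
    exact hle
end

section
/- Every local maximizer of V over 𝒞 (a point α* ∈ 𝒞 admitting a neighborhood U of α* such that V(α*) ≥ V(β) for all β ∈ 𝒞 ∩ U) is a pure Nash equilibrium, and every global maximizer of V over 𝒞 is a constrained strong equilibrium and a social optimum (it maximizes Σ_i u_i over 𝒞). -/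
open scoped Classical

/-- every local maximizer of the potential V over 𝒞 is a pure Nash
equilibrium, and every global maximizer of V over 𝒞 is a constrained strong
equilibrium and a social optimum. -/
theorem potential_maximizers
    (N : ℕ) (hN : 2 ≤ N)
    (P h : Fin N → ℝ) (σ2 : ℝ)
    (hP : ∀ i, 0 < P i) (hh : ∀ i, 0 < h i) (hσ : 0 < σ2)
    (g : Fin N → ℝ → ℝ)
    (hg : ∀ i, StrictMonoOn (g i) (Set.Ici 0))
    (hgpos : ∀ i x, 0 ≤ x → 0 < g i x)
    (C : Finset (Fin N) → ℝ)
    (hC : ∀ Ω : Finset (Fin N), C Ω = Real.log (1 + (∑ i ∈ Ω, P i * h i) / σ2))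
    (𝒞 : Set (Fin N → ℝ))
    (h𝒞 : ∀ α, α ∈ 𝒞 ↔ ((∀ i, 0 ≤ α i) ∧
      ∀ Ω : Finset (Fin N), Ω.Nonempty → ∑ i ∈ Ω, α i ≤ C Ω))
    (u : Fin N → (Fin N → ℝ) → ℝ)
    (hu : ∀ i α, u i α = if α ∈ 𝒞 then g i (α i) else 0)
    (V : (Fin N → ℝ) → ℝ)
    (hV : ∀ α, V α = if α ∈ 𝒞 then ∑ i, g i (α i) else 0) :
    (∀ αs ∈ 𝒞, (∃ U ∈ nhds αs, ∀ β ∈ 𝒞 ∩ U, V β ≤ V αs) →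
      ∀ i : Fin N, ∀ x : ℝ, 0 ≤ x → Function.update αs i x ∈ 𝒞 →
        u i (Function.update αs i x) ≤ u i αs) ∧
    (∀ αs ∈ 𝒞, (∀ β ∈ 𝒞, V β ≤ V αs) →
      (∀ D : Finset (Fin N), D.Nonempty →
        ∀ α' ∈ 𝒞, (∀ k ∉ D, α' k = αs k) → ∃ i ∈ D, u i α' ≤ u i αs) ∧
      (∀ β ∈ 𝒞, ∑ i, u i β ≤ ∑ i, u i αs)) := by

  constructor
  · rintro αs hαs ⟨U, hU, hloc⟩ i x hx hupd
    by_contra hcon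
    push_neg at hcon
    rw [hu, hu, if_pos hupd, if_pos hαs, Function.update_self] at hcon
    obtain ⟨hα0, hαC⟩ := (h𝒞 αs).1 hαs
    have hxa : αs i < x := by
      by_contra hle
      push_neg at hle
      exact absurd ((hg i).monotoneOn (Set.mem_Ici.2 hx) (Set.mem_Ici.2 (hα0 i)) hle)
        (not_le.2 hcon)
    set d : ℝ := x - αs i with hdd
    have hd : 0 < d := by simp [hdd]; linarith
    obtain ⟨ε, hε, hball⟩ := Metric.mem_nhds_iff.1 hU
    set t : ℝ := min 1 (ε / (2 * d)) with htdef
    have ht0 : 0 < t := lt_min one_pos (by positivity)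
    have ht1 : t ≤ 1 := min_le_left _ _
    have htd : t * d < ε := by
      have h1 : t * d ≤ (ε / (2 * d)) * d :=
        mul_le_mul_of_nonneg_right (min_le_right _ _) hd.le
      have h2 : (ε / (2 * d)) * d = ε / 2 := by
        field_simp
      have h3 : t * d ≤ ε / 2 := h2 ▸ h1
      exact h3.trans_lt (half_lt_self hε)
    have htdle : t * d ≤ d := by nlinarith
    set β : Fin N → ℝ := Function.update αs i (αs i + t * d) with hβdef
    have hβi : β i = αs i + t * d := Function.update_self _ _ _
    have hβj : ∀ j, j ≠ i → β j = αs j := fun j hj => Function.update_of_ne hj _ _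
    have hβ𝒞 : β ∈ 𝒞 := by
      rw [h𝒞]
      constructor
      · intro j
        rcases eq_or_ne j i with rfl | hj
        · rw [hβi]; have : 0 ≤ t * d := by positivity
          linarith [hα0 j]
        · rw [hβj j hj]; exact hα0 j
      · intro Ω hΩ
        by_cases hi : i ∈ Ω
        · have hs1 : ∑ j ∈ Ω, β j = (αs i + t * d) + ∑ j ∈ Ω \ {i}, αs j := by
            rw [hβdef, Finset.sum_update_of_mem hi]
          have hs2 : ∑ j ∈ Ω, Function.update αs i x j = x + ∑ j ∈ Ω \ {i}, αs j :=
            Finset.sum_update_of_mem hi _ _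
          have hub : ∑ j ∈ Ω, Function.update αs i x j ≤ C Ω :=
            ((h𝒞 _).1 hupd).2 Ω hΩ
          rw [hs1]
          rw [hs2] at hub
          have : αs i + t * d ≤ x := by simp only [hdd] at htdle ⊢; linarith
          linarith
        · have hs : ∑ j ∈ Ω, β j = ∑ j ∈ Ω, αs j :=
            Finset.sum_congr rfl (fun j hj => hβj j (fun hji => hi (hji ▸ hj)))
          rw [hs]
          exact hαC Ω hΩ
    have hβU : β ∈ U := by
      apply hball
      rw [Metric.mem_ball, dist_pi_lt_iff hε]
      intro j
      rcases eq_or_ne j i with rfl | hj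
      · rw [hβi, Real.dist_eq]
        have : |αs j + t * d - αs j| = t * d := by
          rw [show αs j + t * d - αs j = t * d by ring, abs_of_pos (by positivity)]
        rw [this]; exact htd
      · rw [hβj j hj, dist_self]; exact hε
    have hle := hloc β ⟨hβ𝒞, hβU⟩
    rw [hV, hV, if_pos hβ𝒞, if_pos hαs] at hle
    have hlt : ∑ j, g j (αs j) < ∑ j, g j (β j) := by
      apply Finset.sum_lt_sum
      · intro j _
        rcases eq_or_ne j i with rfl | hj
        · rw [hβi]
          exact (hg j).monotoneOn (Set.mem_Ici.2 (hα0 j))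
            (Set.mem_Ici.2 (add_nonneg (hα0 j) (by positivity)))
            (le_add_of_nonneg_right (by positivity))
        · rw [hβj j hj]
      · exact ⟨i, Finset.mem_univ i, by
          rw [hβi]
          exact hg i (Set.mem_Ici.2 (hα0 i))
            (Set.mem_Ici.2 (add_nonneg (hα0 i) (by positivity)))
            (lt_add_of_pos_right _ (by positivity))⟩
    linarith
  · intro αs hαs hmax
    obtain ⟨hα0, _⟩ := (h𝒞 αs).1 hαs
    constructor
    · intro D hD α' hα' hk
      by_contra hcon
      push_neg at hcon
      have hlt : V αs < V α' := by
        rw [hV, hV, if_pos hαs, if_pos hα']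
        apply Finset.sum_lt_sum
        · intro j _
          by_cases hj : j ∈ D
          · have := hcon j hj
            rw [hu, hu, if_pos hα', if_pos hαs] at this
            exact this.le
          · rw [hk j hj]
        · obtain ⟨j, hj⟩ := hD
          refine ⟨j, Finset.mem_univ j, ?_⟩
          have := hcon j hj
          rwa [hu, hu, if_pos hα', if_pos hαs] at this
      linarith [hmax α' hα']
    · intro β hβ
      have h1 : ∑ i, u i β = V β := by
        rw [hV, if_pos hβ]
        exact Finset.sum_congr rfl (fun j _ => by rw [hu, if_pos hβ])
      have h2 : ∑ i, u i αs = V αs := by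
        rw [hV, if_pos hαs]
        exact Finset.sum_congr rfl (fun j _ => by rw [hu, if_pos hαs])
      rw [h1, h2]
      exact hmax β hβ
end

section
/- Assume each g_i is, in addition, continuous on [0,∞). Then the price of stability of the constrained rate allocation game equals 1: there exists a pure Nash equilibrium α* ∈ 𝒞 such that Σ_{i=1}^N g_i(α*_i) = max_{β ∈ 𝒞} Σ_{i=1}^N g_i(β_i). -/
open scoped Classical

/-- with continuous utilities, the price of stability equals 1: some
pure Nash equilibrium achieves the social optimum over 𝒞. -/
theorem price_of_stability_one
    (N : ℕ) (hN : 2 ≤ N)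
    (P h : Fin N → ℝ) (σ2 : ℝ)
    (hP : ∀ i, 0 < P i) (hh : ∀ i, 0 < h i) (hσ : 0 < σ2)
    (g : Fin N → ℝ → ℝ)
    (hg : ∀ i, StrictMonoOn (g i) (Set.Ici 0))
    (hgpos : ∀ i x, 0 ≤ x → 0 < g i x)
    (C : Finset (Fin N) → ℝ)
    (hC : ∀ Ω : Finset (Fin N), C Ω = Real.log (1 + (∑ i ∈ Ω, P i * h i) / σ2))
    (𝒞 : Set (Fin N → ℝ))
    (h𝒞 : ∀ α, α ∈ 𝒞 ↔ ((∀ i, 0 ≤ α i) ∧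
      ∀ Ω : Finset (Fin N), Ω.Nonempty → ∑ i ∈ Ω, α i ≤ C Ω))
    (u : Fin N → (Fin N → ℝ) → ℝ)
    (hu : ∀ i α, u i α = if α ∈ 𝒞 then g i (α i) else 0)
    (hgc : ∀ i, ContinuousOn (g i) (Set.Ici 0)) :
    ∃ αs ∈ 𝒞,
      (∀ i : Fin N, ∀ x : ℝ, 0 ≤ x → Function.update αs i x ∈ 𝒞 →
        u i (Function.update αs i x) ≤ u i αs) ∧
      ∀ β ∈ 𝒞, ∑ i, g i (β i) ≤ ∑ i, g i (αs i) := by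
  -- 0 ∈ 𝒞
  have hCpos : ∀ Ω : Finset (Fin N), 0 ≤ C Ω := by
    intro Ω
    rw [hC]
    apply Real.log_nonneg
    have hs : 0 ≤ ∑ i ∈ Ω, P i * h i :=
      Finset.sum_nonneg fun i _ => le_of_lt (mul_pos (hP i) (hh i))
    nlinarith [div_nonneg hs hσ.le]
  have hne : (fun _ => (0:ℝ)) ∈ 𝒞 := by
    rw [h𝒞]
    exact ⟨fun i => le_refl 0, fun Ω _ => by simpa using hCpos Ω⟩
  -- 𝒞 is closed
  have hclosed : IsClosed 𝒞 := by
    have heq : 𝒞 = (⋂ i, {α : Fin N → ℝ | 0 ≤ α i}) ∩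
        ⋂ Ω ∈ {Ω : Finset (Fin N) | Ω.Nonempty}, {α : Fin N → ℝ | ∑ i ∈ Ω, α i ≤ C Ω} := by
      ext α
      simp [h𝒞, Set.mem_iInter]
    rw [heq]
    refine IsClosed.inter (isClosed_iInter fun i => ?_) (isClosed_biInter fun Ω _ => ?_)
    · exact isClosed_le continuous_const (continuous_apply i)
    · exact isClosed_le (continuous_finset_sum _ fun i _ => continuous_apply i) continuous_const
  -- 𝒞 is compact
  have hK : IsCompact 𝒞 := by
    have hsub : 𝒞 ⊆ Set.pi Set.univ (fun i => Set.Icc (0:ℝ) (C {i})) := by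
      intro α hα i _
      rw [h𝒞] at hα
      refine ⟨hα.1 i, ?_⟩
      simpa using hα.2 {i} ⟨i, Finset.mem_singleton_self i⟩
    exact (isCompact_univ_pi fun i => isCompact_Icc).of_isClosed_subset hclosed hsub
  -- continuity of the social welfare on 𝒞
  have hcont : ContinuousOn (fun α : Fin N → ℝ => ∑ i, g i (α i)) 𝒞 := by
    apply continuousOn_finset_sum
    intro i _
    exact (hgc i).comp (continuous_apply i).continuousOn
      (fun α hα => ((h𝒞 α).mp hα).1 i)
  obtain ⟨αs, hαs, hmax⟩ := hK.exists_isMaxOn ⟨_, hne⟩ hcont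
  refine ⟨αs, hαs, ?_, fun β hβ => hmax hβ⟩
  intro i x hx0 hupd
  rw [hu, hu, if_pos hupd, if_pos hαs]
  have hsum := hmax hupd
  have h1 : ∑ j, g j (Function.update αs i x j)
      = g i x + ∑ j ∈ Finset.univ.erase i, g j (αs j) := by
    have : (fun j => g j (Function.update αs i x j))
        = Function.update (fun j => g j (αs j)) i (g i x) := by
      funext j
      by_cases hj : j = i
      · subst hj; simp
      · simp [Function.update_of_ne hj]
    rw [this, Finset.sum_update_of_mem (Finset.mem_univ i), Finset.sdiff_singleton_eq_erase]
  have h2 : ∑ j, g j (αs j)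
      = g i (αs i) + ∑ j ∈ Finset.univ.erase i, g j (αs j) :=
    (Finset.add_sum_erase _ _ (Finset.mem_univ i)).symm
  have : g i x ≤ g i (αs i) := by
    have := hsum
    simp only [Set.mem_setOf_eq] at this
    rw [h1, h2] at this
    linarith
  simpa [Function.update_self] using this
end

section
/- In the symmetric case, the symmetric profile (r, r, …, r) with r ≥ 0 is a pure Nash equilibrium if and only if r = C_N/N; i.e., the profile in which every user transmits at rate C_N/N = (1/N)·log(1 + N P h/σ²) is the unique symmetric pure Nash equilibrium. -/
open scoped Classical

lemma key_log_ineq (c : ℝ) (hc : 0 < c) (k n : ℕ) (hk : 1 ≤ k) (hkn : k ≤ n) :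
    (k : ℝ) * Real.log (1 + n * c) ≤ (n : ℝ) * Real.log (1 + k * c) := by
  have hk0 : (0:ℝ) < k := by exact_mod_cast Nat.lt_of_lt_of_le Nat.zero_lt_one hk
  have hkc : (0:ℝ) < 1 + k * c := by nlinarith
  have hp : (1:ℝ) ≤ (n:ℝ) / k := by
    rw [le_div_iff₀ hk0, one_mul]; exact_mod_cast hkn
  have hB : 1 + ((n:ℝ)/k) * ((k:ℝ)*c) ≤ (1 + (k:ℝ)*c) ^ ((n:ℝ)/k) :=
    one_add_mul_self_le_rpow_one_add (by nlinarith) hp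
  have heq : ((n:ℝ)/k) * ((k:ℝ)*c) = (n:ℝ) * c := by field_simp
  rw [heq] at hB
  have hlog : Real.log (1 + (n:ℝ)*c) ≤ ((n:ℝ)/k) * Real.log (1 + (k:ℝ)*c) := by
    have h1 : (0:ℝ) < 1 + (n:ℝ)*c := by positivity
    calc Real.log (1 + (n:ℝ)*c) ≤ Real.log ((1 + (k:ℝ)*c) ^ ((n:ℝ)/k)) :=
          Real.log_le_log h1 hB
      _ = ((n:ℝ)/k) * Real.log (1 + (k:ℝ)*c) := Real.log_rpow hkc _
  have := mul_le_mul_of_nonneg_left hlog hk0.le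
  calc (k:ℝ) * Real.log (1 + n * c) ≤ (k:ℝ) * (((n:ℝ)/k) * Real.log (1 + (k:ℝ)*c)) := this
    _ = (n:ℝ) * Real.log (1 + k * c) := by field_simp

/-- in the symmetric case, the symmetric profile (r,…,r) with r ≥ 0
is a pure Nash equilibrium iff r = C_N / N; i.e., everyone transmitting at rate
C_N / N is the unique symmetric pure Nash equilibrium. -/
theorem unique_symmetric_pure_nash
    (N : ℕ) (hN : 2 ≤ N)
    (P h : Fin N → ℝ) (σ2 : ℝ)
    (hP : ∀ i, 0 < P i) (hh : ∀ i, 0 < h i) (hσ : 0 < σ2)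
    (g : Fin N → ℝ → ℝ)
    (hg : ∀ i, StrictMonoOn (g i) (Set.Ici 0))
    (hgpos : ∀ i x, 0 ≤ x → 0 < g i x)
    (C : Finset (Fin N) → ℝ)
    (hC : ∀ Ω : Finset (Fin N), C Ω = Real.log (1 + (∑ i ∈ Ω, P i * h i) / σ2))
    (𝒞 : Set (Fin N → ℝ))
    (h𝒞 : ∀ α, α ∈ 𝒞 ↔ ((∀ i, 0 ≤ α i) ∧
      ∀ Ω : Finset (Fin N), Ω.Nonempty → ∑ i ∈ Ω, α i ≤ C Ω))
    (u : Fin N → (Fin N → ℝ) → ℝ)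
    (hu : ∀ i α, u i α = if α ∈ 𝒞 then g i (α i) else 0)
    (P₀ h₀ : ℝ) (g₀ : ℝ → ℝ)
    (hPsym : ∀ i, P i = P₀) (hhsym : ∀ i, h i = h₀) (hgsym : ∀ i, g i = g₀) :
    ∀ r : ℝ, 0 ≤ r →
      (((fun _ : Fin N => r) ∈ 𝒞 ∧
        ∀ i : Fin N, ∀ x : ℝ, 0 ≤ x →
          Function.update (fun _ : Fin N => r) i x ∈ 𝒞 →
          u i (Function.update (fun _ : Fin N => r) i x) ≤ u i (fun _ : Fin N => r))
        ↔ r = C Finset.univ / N) := by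
  have hN0 : 0 < N := by omega
  have i0 : Fin N := ⟨0, hN0⟩
  haveI : Nonempty (Fin N) := ⟨i0⟩
  have hq : 0 < P₀ * h₀ := by
    have := mul_pos (hP i0) (hh i0); rwa [hPsym i0, hhsym i0] at this
  set c : ℝ := P₀ * h₀ / σ2 with hcdef
  have hc : 0 < c := div_pos hq hσ
  -- C in terms of cardinality
  have hCcard : ∀ Ω : Finset (Fin N), C Ω = Real.log (1 + (Ω.card : ℝ) * c) := by
    intro Ω
    rw [hC]
    congr 1
    have : ∑ i ∈ Ω, P i * h i = (Ω.card : ℝ) * (P₀ * h₀) := by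
      rw [Finset.sum_congr rfl (fun i _ => by rw [hPsym i, hhsym i]),
        Finset.sum_const, nsmul_eq_mul]
    rw [this, hcdef]; ring
  have hCu : C Finset.univ = Real.log (1 + (N : ℝ) * c) := by
    rw [hCcard]; simp
  -- key: card * (C univ / N) ≤ C Ω for nonempty Ω
  have hkey : ∀ Ω : Finset (Fin N), Ω.Nonempty →
      (Ω.card : ℝ) * (C Finset.univ / N) ≤ C Ω := by
    intro Ω hΩ
    have h1 : 1 ≤ Ω.card := Finset.Nonempty.card_pos hΩ
    have h2 : Ω.card ≤ N := by
      have := Finset.card_le_univ Ω; simpa using this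
    have := key_log_ineq c hc Ω.card N h1 h2
    have hN0' : (0:ℝ) < N := by exact_mod_cast hN0
    rw [hCu, hCcard, ← mul_div_assoc, div_le_iff₀ hN0']
    nlinarith [this]
  intro r hr
  constructor
  · rintro ⟨hmem, hNE⟩
    have hm := (h𝒞 _).1 hmem
    have hsum : ∀ Ω : Finset (Fin N), Ω.Nonempty → (Ω.card : ℝ) * r ≤ C Ω := by
      intro Ω hΩ
      have := hm.2 Ω hΩ
      rwa [Finset.sum_const, nsmul_eq_mul] at this
    have hrN : r ≤ C Finset.univ / N := by
      have := hsum Finset.univ Finset.univ_nonempty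
      have hN0' : (0:ℝ) < N := by exact_mod_cast hN0
      rw [Finset.card_univ, Fintype.card_fin] at this
      rw [le_div_iff₀ hN0']; linarith
    by_contra hne
    have hlt : r < C Finset.univ / N := lt_of_le_of_ne hrN hne
    set S : Finset (Finset (Fin N)) :=
      Finset.univ.powerset.filter (fun Ω => i0 ∈ Ω) with hSdef
    have hSne : S.Nonempty := ⟨{i0}, by simp [hSdef]⟩
    set f : Finset (Fin N) → ℝ := fun Ω => C Ω - ((Ω.card : ℝ) - 1) * r with hfdef
    set x : ℝ := S.inf' hSne f with hxdef
    have hcardpos : ∀ Ω ∈ S, 1 ≤ Ω.card := by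
      intro Ω hΩ
      have hi : i0 ∈ Ω := (Finset.mem_filter.1 hΩ).2
      exact Finset.Nonempty.card_pos ⟨i0, hi⟩
    have hxr : r < x := by
      rw [hxdef, Finset.lt_inf'_iff]
      intro Ω hΩ
      have h1 : 1 ≤ Ω.card := hcardpos Ω hΩ
      have h1' : (1:ℝ) ≤ (Ω.card : ℝ) := by exact_mod_cast h1
      have hkΩ := hkey Ω (Finset.card_pos.1 h1)
      have : (Ω.card : ℝ) * r < (Ω.card : ℝ) * (C Finset.univ / N) :=
        mul_lt_mul_of_pos_left hlt (by linarith)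
      rw [hfdef]; dsimp only
      nlinarith
    have hx0 : 0 ≤ x := hr.trans hxr.le
    set upd := Function.update (fun _ : Fin N => r) i0 x with hupddef
    have hupd : upd ∈ 𝒞 := by
      rw [h𝒞]
      constructor
      · intro j
        rw [hupddef, Function.update_apply]
        split <;> [exact hx0; exact hr]
      · intro Ω hΩ
        by_cases hiΩ : i0 ∈ Ω
        · rw [hupddef, Finset.sum_update_of_mem hiΩ, Finset.sum_const, nsmul_eq_mul]
          have h1 : 1 ≤ Ω.card := Finset.Nonempty.card_pos ⟨i0, hiΩ⟩
          have hcd : (Ω \ {i0}).card = Ω.card - 1 := by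
            rw [Finset.card_sdiff_of_subset (Finset.singleton_subset_iff.2 hiΩ), Finset.card_singleton]
          have hcast : (((Ω \ {i0}).card : ℕ) : ℝ) = (Ω.card : ℝ) - 1 := by
            rw [hcd, Nat.cast_sub h1]; simp
          rw [hcast]
          have hle : x ≤ f Ω := by
            rw [hxdef]
            exact Finset.inf'_le f (Finset.mem_filter.2
              ⟨Finset.mem_powerset.2 (Finset.subset_univ Ω), hiΩ⟩)
          rw [hfdef] at hle; dsimp only at hle
          linarith
        · rw [hupddef, Finset.sum_update_of_notMem hiΩ]
          exact hm.2 Ω hΩ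
    have hNEi := hNE i0 x hx0 hupd
    rw [hu, hu, if_pos hupd, if_pos hmem] at hNEi
    rw [Function.update_self] at hNEi
    exact absurd hNEi (not_le.2 (hg i0 (Set.mem_Ici.2 hr) (Set.mem_Ici.2 hx0) hxr))
  · intro hreq
    have hN0' : (0:ℝ) < N := by exact_mod_cast hN0
    have hCNr : C Finset.univ = (N : ℝ) * r := by
      rw [hreq]; field_simp
    have hmem : (fun _ : Fin N => r) ∈ 𝒞 := by
      rw [h𝒞]
      refine ⟨fun _ => hr, fun Ω hΩ => ?_⟩
      rw [Finset.sum_const, nsmul_eq_mul]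
      have := hkey Ω hΩ
      rwa [← hreq] at this
    refine ⟨hmem, ?_⟩
    intro i x hx hupd
    have hc2 := ((h𝒞 _).1 hupd).2 Finset.univ Finset.univ_nonempty
    rw [Finset.sum_update_of_mem (Finset.mem_univ i), Finset.sum_const, nsmul_eq_mul] at hc2
    have hcd : ((Finset.univ : Finset (Fin N)) \ {i}).card = N - 1 := by
      rw [Finset.card_sdiff_of_subset (Finset.singleton_subset_iff.2 (Finset.mem_univ i)),
        Finset.card_singleton, Finset.card_univ, Fintype.card_fin]
    have hcast : ((((Finset.univ : Finset (Fin N)) \ {i}).card : ℕ) : ℝ) = (N : ℝ) - 1 := by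
      rw [hcd, Nat.cast_sub (by omega)]; simp
    rw [hcast, hCNr] at hc2
    have hxle : x ≤ r := by nlinarith
    rw [hu, hu, if_pos hupd, if_pos hmem, Function.update_self]
    exact (hg i).monotoneOn (Set.mem_Ici.2 hx) (Set.mem_Ici.2 hr) hxle
end

section
/- In the symmetric case, the pure strategy r* := C_N/N is a constrained evolutionarily stable strategy: for every mutant rate mut ≥ 0 with mut ≠ r*, there exists ε₀ ∈ (0,1] such that for all ε ∈ (0, ε₀), writing r_ε := ε·mut + (1−ε)·r*, if the symmetric profile (r_ε, …, r_ε) belongs to 𝒞, then u_1(r*, r_ε, …, r_ε) > u_1(mut, r_ε, …, r_ε). -/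
open scoped Classical

/-- in the symmetric case, the pure strategy r* = C_N / N is a
constrained evolutionarily stable strategy. -/
theorem constrained_ess
    (N : ℕ) (hN : 2 ≤ N)
    (P h : Fin N → ℝ) (σ2 : ℝ)
    (hP : ∀ i, 0 < P i) (hh : ∀ i, 0 < h i) (hσ : 0 < σ2)
    (g : Fin N → ℝ → ℝ)
    (hg : ∀ i, StrictMonoOn (g i) (Set.Ici 0))
    (hgpos : ∀ i x, 0 ≤ x → 0 < g i x)
    (C : Finset (Fin N) → ℝ)
    (hC : ∀ Ω : Finset (Fin N), C Ω = Real.log (1 + (∑ i ∈ Ω, P i * h i) / σ2))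
    (𝒞 : Set (Fin N → ℝ))
    (h𝒞 : ∀ α, α ∈ 𝒞 ↔ ((∀ i, 0 ≤ α i) ∧
      ∀ Ω : Finset (Fin N), Ω.Nonempty → ∑ i ∈ Ω, α i ≤ C Ω))
    (u : Fin N → (Fin N → ℝ) → ℝ)
    (hu : ∀ i α, u i α = if α ∈ 𝒞 then g i (α i) else 0)
    (P₀ h₀ : ℝ) (g₀ : ℝ → ℝ)
    (hPsym : ∀ i, P i = P₀) (hhsym : ∀ i, h i = h₀) (hgsym : ∀ i, g i = g₀) :
    ∀ mutant : ℝ, 0 ≤ mutant → mutant ≠ C Finset.univ / N →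
      ∃ ε₀ ∈ Set.Ioc (0 : ℝ) 1, ∀ ε ∈ Set.Ioo (0 : ℝ) ε₀,
        (fun _ : Fin N => ε * mutant + (1 - ε) * (C Finset.univ / N)) ∈ 𝒞 →
        u ⟨0, by omega⟩
            (Function.update (fun _ : Fin N => ε * mutant + (1 - ε) * (C Finset.univ / N))
              ⟨0, by omega⟩ (C Finset.univ / N)) >
          u ⟨0, by omega⟩
            (Function.update (fun _ : Fin N => ε * mutant + (1 - ε) * (C Finset.univ / N))
              ⟨0, by omega⟩ mutant) := by
  intro mutant hmut hne
  have hN0 : 0 < N := by omega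
  set i0 : Fin N := ⟨0, by omega⟩ with hi0
  have hP0 : 0 < P₀ := by rw [← hPsym i0]; exact hP i0
  have hh0 : 0 < h₀ := by rw [← hhsym i0]; exact hh i0
  set x : ℝ := P₀ * h₀ / σ2 with hxdef
  have hxpos : 0 < x := by positivity
  have hNpos : (0:ℝ) < N := by exact_mod_cast hN0
  have hCcard : ∀ Ω : Finset (Fin N), C Ω = Real.log (1 + (Ω.card : ℝ) * x) := by
    intro Ω
    rw [hC]
    congr 1
    have : ∑ i ∈ Ω, P i * h i = (Ω.card : ℝ) * (P₀ * h₀) := by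
      rw [Finset.sum_congr rfl (fun i _ => by rw [hPsym, hhsym]), Finset.sum_const,
        nsmul_eq_mul]
    rw [this, hxdef]; ring
  set rstar : ℝ := C Finset.univ / N with hrstar
  have hCuniv : C Finset.univ = Real.log (1 + (N:ℝ) * x) := by
    rw [hCcard]; simp
  have hCpos : 0 < C Finset.univ := by
    rw [hCuniv]; apply Real.log_pos; nlinarith
  have hrpos : 0 < rstar := div_pos hCpos hNpos
  have hNr : (N:ℝ) * rstar = C Finset.univ := by
    rw [hrstar]; field_simp
  -- key concavity inequality
  have hkey : ∀ k : ℕ, 1 ≤ k → k ≤ N → (k:ℝ) * rstar ≤ Real.log (1 + (k:ℝ) * x) := by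
    intro k hk1 hkN
    have hkN' : (k:ℝ) ≤ N := by exact_mod_cast hkN
    have ha : (0:ℝ) ≤ (k:ℝ)/N := by positivity
    have hb : (0:ℝ) ≤ 1 - (k:ℝ)/N := by
      rw [sub_nonneg]; exact div_le_one_of_le₀ hkN' (le_of_lt hNpos)
    have hconc := strictConcaveOn_log_Ioi.concaveOn.2
      (x := 1 + (N:ℝ)*x) (y := 1)
      (by simp only [Set.mem_Ioi]; nlinarith)
      (by simp only [Set.mem_Ioi]; norm_num) ha hb (by ring)
    simp only [smul_eq_mul, Real.log_one, mul_zero, add_zero, mul_one] at hconc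
    have harg : (k:ℝ)/N * (1+(N:ℝ)*x) + (1 - (k:ℝ)/N) = 1 + (k:ℝ)*x := by
      field_simp; ring
    rw [harg] at hconc
    calc (k:ℝ) * rstar = (k:ℝ)/N * Real.log (1 + (N:ℝ)*x) := by
          rw [hrstar, hCuniv]; ring
      _ ≤ _ := hconc
  refine ⟨1, ⟨one_pos, le_refl 1⟩, ?_⟩
  intro ε hε hmem
  obtain ⟨hε0, hε1⟩ := hε
  set rε : ℝ := ε * mutant + (1 - ε) * rstar with hrε
  have hmem' := (h𝒞 _).1 hmem
  have hrεnn : 0 ≤ rε := hmem'.1 i0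
  have hsums : ∀ Ω : Finset (Fin N), Ω.Nonempty → (Ω.card : ℝ) * rε ≤ C Ω := by
    intro Ω hΩ
    have := hmem'.2 Ω hΩ
    simpa [Finset.sum_const, nsmul_eq_mul] using this
  have hsum_upd : ∀ (v : ℝ) (Ω : Finset (Fin N)), i0 ∈ Ω →
      ∑ i ∈ Ω, Function.update (fun _ : Fin N => rε) i0 v i
        = v + ((Ω.card : ℝ) - 1) * rε := by
    intro v Ω hi
    rw [Finset.sum_update_of_mem hi, Finset.sum_const, nsmul_eq_mul]
    have hcard : (Ω \ {i0}).card = Ω.card - 1 := by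
      rw [Finset.card_sdiff_of_subset (Finset.singleton_subset_iff.2 hi), Finset.card_singleton]
    have h1 : 1 ≤ Ω.card := Finset.card_pos.2 ⟨i0, hi⟩
    rw [hcard, Nat.cast_sub h1, Nat.cast_one]
  have hsum_upd_not : ∀ (v : ℝ) (Ω : Finset (Fin N)), i0 ∉ Ω →
      ∑ i ∈ Ω, Function.update (fun _ : Fin N => rε) i0 v i = (Ω.card : ℝ) * rε := by
    intro v Ω hi
    have : ∑ i ∈ Ω, Function.update (fun _ : Fin N => rε) i0 v i = ∑ _i ∈ Ω, rε := by
      apply Finset.sum_congr rfl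
      intro i hiΩ
      have : i ≠ i0 := by rintro rfl; exact hi hiΩ
      rw [Function.update_of_ne this]
    rw [this, Finset.sum_const, nsmul_eq_mul]
  have hcardle : ∀ Ω : Finset (Fin N), Ω.card ≤ N := by
    intro Ω
    simpa using Finset.card_le_card (Finset.subset_univ Ω)
  -- payoffs
  rw [hu, hu]
  have hval1 : Function.update (fun _ : Fin N => rε) i0 rstar i0 = rstar :=
    Function.update_self _ _ _
  have hval2 : Function.update (fun _ : Fin N => rε) i0 mutant i0 = mutant :=
    Function.update_self _ _ _
  rcases lt_or_gt_of_ne hne with hlt | hgt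
  · -- mutant < rstar
    have hrεlt : rε < rstar := by rw [hrε]; nlinarith
    have hmutlt : mutant < rε := by rw [hrε]; nlinarith
    have hstar_mem : Function.update (fun _ : Fin N => rε) i0 rstar ∈ 𝒞 := by
      rw [h𝒞]
      constructor
      · intro i
        by_cases hii : i = i0
        · subst hii; rw [Function.update_self]; exact le_of_lt hrpos
        · rw [Function.update_of_ne hii]; exact hrεnn
      · intro Ω hΩ
        by_cases hiΩ : i0 ∈ Ω
        · rw [hsum_upd _ _ hiΩ, hCcard]
          have h1 : 1 ≤ Ω.card := Finset.card_pos.2 ⟨i0, hiΩ⟩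
          have h1' : (1:ℝ) ≤ Ω.card := by exact_mod_cast h1
          have := hkey Ω.card h1 (hcardle Ω)
          nlinarith
        · rw [hsum_upd_not _ _ hiΩ]
          exact hsums Ω hΩ
    have hmut_mem : Function.update (fun _ : Fin N => rε) i0 mutant ∈ 𝒞 := by
      rw [h𝒞]
      constructor
      · intro i
        by_cases hii : i = i0
        · subst hii; rw [Function.update_self]; exact hmut
        · rw [Function.update_of_ne hii]; exact hrεnn
      · intro Ω hΩ
        calc ∑ i ∈ Ω, Function.update (fun _ : Fin N => rε) i0 mutant i
            ≤ ∑ _i ∈ Ω, rε := by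
              apply Finset.sum_le_sum
              intro i _
              by_cases hii : i = i0
              · subst hii; rw [Function.update_self]; exact le_of_lt hmutlt
              · rw [Function.update_of_ne hii]
          _ ≤ C Ω := by
              rw [Finset.sum_const, nsmul_eq_mul]; exact hsums Ω hΩ
    rw [if_pos hstar_mem, if_pos hmut_mem, hval1, hval2]
    exact hg i0 hmut (le_of_lt hrpos) hlt
  · -- rstar < mutant
    have hrεgt : rstar < rε := by rw [hrε]; nlinarith
    have hstar_mem : Function.update (fun _ : Fin N => rε) i0 rstar ∈ 𝒞 := by
      rw [h𝒞]
      constructor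
      · intro i
        by_cases hii : i = i0
        · subst hii; rw [Function.update_self]; exact le_of_lt hrpos
        · rw [Function.update_of_ne hii]; exact hrεnn
      · intro Ω hΩ
        calc ∑ i ∈ Ω, Function.update (fun _ : Fin N => rε) i0 rstar i
            ≤ ∑ _i ∈ Ω, rε := by
              apply Finset.sum_le_sum
              intro i _
              by_cases hii : i = i0
              · subst hii; rw [Function.update_self]; exact le_of_lt hrεgt
              · rw [Function.update_of_ne hii]
          _ ≤ C Ω := by
              rw [Finset.sum_const, nsmul_eq_mul]; exact hsums Ω hΩ
    have hmut_notmem : Function.update (fun _ : Fin N => rε) i0 mutant ∉ 𝒞 := by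
      intro hc
      have hsum := ((h𝒞 _).1 hc).2 Finset.univ ⟨i0, Finset.mem_univ i0⟩
      rw [hsum_upd _ _ (Finset.mem_univ i0)] at hsum
      rw [Finset.card_univ, Fintype.card_fin] at hsum
      have hN1 : (1:ℝ) ≤ N := by exact_mod_cast hN0
      rw [← hNr] at hsum
      rw [hrε] at hsum
      nlinarith
    rw [if_pos hstar_mem, if_neg hmut_notmem, hval1]
    exact hgpos i0 rstar (le_of_lt hrpos)
end

section
/- Any probability distribution over the maximal face of the capacity region is a constrained correlated equilibrium: if μ is a Borel probability measure on ℝ^N with μ(F_max) = 1, where F_max := {α ∈ 𝒞 : Σ_{i=1}^N α_i = C_N}, then for every user i and every Borel-measurable deviation map r : ℝ → [0,∞), ∫ ( u_i(α) − u_i(r(α_i), α_{−i}) ) dμ(α) ≥ 0. -/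
/-!
On the maximal face the sum-rate constraint is tight, so a unilateral deviation that stays in
the capacity region can only lower the deviating user's rate, hence its utility, while a
deviation leaving the region earns payoff `0`, below any utility. The integrand is therefore
nonnegative almost surely.
-/

open MeasureTheory Set

namespace GaussianMAC

variable {ι : Type*}

def capacityRegion (C : Finset ι → ℝ) : Set (ι → ℝ) :=
  {α | (∀ i, 0 ≤ α i) ∧ ∀ Ω : Finset ι, Ω.Nonempty → ∑ i ∈ Ω, α i ≤ C Ω}

def maximalFace [Fintype ι] (C : Finset ι → ℝ) : Set (ι → ℝ) :=
  {α | α ∈ capacityRegion C ∧ ∑ i, α i = C Finset.univ}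

open Classical in
noncomputable def payoff (C : Finset ι → ℝ) (v : ℝ → ℝ) (i : ι) (α : ι → ℝ) : ℝ :=
  if α ∈ capacityRegion C then v (α i) else 0

theorem isClosed_capacityRegion (C : Finset ι → ℝ) : IsClosed (capacityRegion C) := by
  simp only [capacityRegion, ofPred_and, ofPred_forall]
  refine (isClosed_iInter fun i => isClosed_le continuous_const (continuous_apply i)).inter
    (isClosed_iInter fun Ω => isClosed_iInter fun _ => isClosed_le ?_ continuous_const)
  fun_prop

theorem isClosed_maximalFace [Fintype ι] (C : Finset ι → ℝ) : IsClosed (maximalFace C) :=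
  (isClosed_capacityRegion C).inter (isClosed_eq (by fun_prop) continuous_const)

theorem le_of_update_mem_capacityRegion [Fintype ι] [DecidableEq ι] {C : Finset ι → ℝ}
    {α : ι → ℝ} {i : ι} {r : ℝ} (hα : α ∈ maximalFace C)
    (hr : Function.update α i r ∈ capacityRegion C) : r ≤ α i := by
  have hsum_le : ∑ j, Function.update α i r j ≤ C Finset.univ :=
    hr.2 Finset.univ ⟨i, Finset.mem_univ i⟩
  rw [Finset.sum_update_of_mem (Finset.mem_univ i)] at hsum_le
  have hsum_eq := hα.2
  rw [Finset.sum_eq_add_sum_sdiff_singleton_of_mem (Finset.mem_univ i)] at hsum_eq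
  linarith

theorem payoff_update_le_of_mem_maximalFace [Fintype ι] [DecidableEq ι] {C : Finset ι → ℝ}
    {v : ℝ → ℝ} (hmono : MonotoneOn v (Ici 0)) (hnonneg : ∀ x, 0 ≤ x → 0 ≤ v x)
    {α : ι → ℝ} (hα : α ∈ maximalFace C) (i : ι) {r : ℝ} (hr : 0 ≤ r) :
    payoff C v i (Function.update α i r) ≤ payoff C v i α := by
  have hα₀ : 0 ≤ α i := hα.1.1 i
  rw [payoff, payoff, if_pos hα.1]
  split_ifs with hdev
  · rw [Function.update_self]
    exact hmono hr hα₀ (le_of_update_mem_capacityRegion hα hdev)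
  · exact hnonneg _ hα₀

end GaussianMAC

open scoped Classical
open GaussianMAC

theorem maximal_face_correlated_equilibrium_general
    (N : ℕ)
    (g : Fin N → ℝ → ℝ)
    (hg : ∀ i, StrictMonoOn (g i) (Set.Ici 0))
    (hgpos : ∀ i x, 0 ≤ x → 0 < g i x)
    (C : Finset (Fin N) → ℝ)
    (𝒞 : Set (Fin N → ℝ))
    (h𝒞 : ∀ α, α ∈ 𝒞 ↔ ((∀ i, 0 ≤ α i) ∧
      ∀ Ω : Finset (Fin N), Ω.Nonempty → ∑ i ∈ Ω, α i ≤ C Ω))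
    (u : Fin N → (Fin N → ℝ) → ℝ)
    (hu : ∀ i α, u i α = if α ∈ 𝒞 then g i (α i) else 0)
    (μ : Measure (Fin N → ℝ)) [IsProbabilityMeasure μ]
    (hμ : μ {α : Fin N → ℝ | α ∈ 𝒞 ∧ ∑ i, α i = C Finset.univ} = 1) :
    ∀ i : Fin N, ∀ r : ℝ → ℝ, Measurable r → (∀ x, 0 ≤ r x) →
      0 ≤ ∫ α, (u i α - u i (Function.update α i (r (α i)))) ∂μ := by
  intro i r _ hr
  obtain rfl : 𝒞 = capacityRegion C := Set.ext h𝒞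
  have hu_eq : u i = payoff C (g i) i := funext (hu i)
  have hface : ∀ᵐ α ∂μ, α ∈ maximalFace C := by
    refine (ae_iff_measure_eq (isClosed_maximalFace C).measurableSet.nullMeasurableSet).2 ?_
    rwa [measure_univ]
  refine integral_nonneg_of_ae (hface.mono fun α hα => ?_)
  rw [hu_eq, Pi.zero_apply, sub_nonneg]
  exact payoff_update_le_of_mem_maximalFace (hg i).monotoneOn
    (fun x hx => (hgpos i x hx).le) hα i (hr _)

/-- any probability distribution supported on the maximal face of the
capacity region is a constrained correlated equilibrium. -/
theorem maximal_face_correlated_equilibrium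
    (N : ℕ) (hN : 2 ≤ N)
    (P h : Fin N → ℝ) (σ2 : ℝ)
    (hP : ∀ i, 0 < P i) (hh : ∀ i, 0 < h i) (hσ : 0 < σ2)
    (g : Fin N → ℝ → ℝ)
    (hg : ∀ i, StrictMonoOn (g i) (Set.Ici 0))
    (hgpos : ∀ i x, 0 ≤ x → 0 < g i x)
    (C : Finset (Fin N) → ℝ)
    (hC : ∀ Ω : Finset (Fin N), C Ω = Real.log (1 + (∑ i ∈ Ω, P i * h i) / σ2))
    (𝒞 : Set (Fin N → ℝ))
    (h𝒞 : ∀ α, α ∈ 𝒞 ↔ ((∀ i, 0 ≤ α i) ∧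
      ∀ Ω : Finset (Fin N), Ω.Nonempty → ∑ i ∈ Ω, α i ≤ C Ω))
    (u : Fin N → (Fin N → ℝ) → ℝ)
    (hu : ∀ i α, u i α = if α ∈ 𝒞 then g i (α i) else 0)
    (hgc : ∀ i, ContinuousOn (g i) (Set.Ici 0))
    (μ : Measure (Fin N → ℝ)) [IsProbabilityMeasure μ]
    (hμ : μ {α : Fin N → ℝ | α ∈ 𝒞 ∧ ∑ i, α i = C Finset.univ} = 1) :
    ∀ i : Fin N, ∀ r : ℝ → ℝ, Measurable r → (∀ x, 0 ≤ r x) →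
      0 ≤ ∫ α, (u i α - u i (Function.update α i (r (α i)))) ∂μ :=
  maximal_face_correlated_equilibrium_general N g hg hgpos C 𝒞 h𝒞 u hu μ hμ
end

section
/- The hybrid rate control and channel selection game admits a Nash equilibrium: there exists a feasible profile (α*, P*) such that for every user i and every unilateral deviation (α_i, p_i) with α_i ≥ 0 and p_i a probability vector over the J receivers for which the profile ((α_i, α*_{−i}), (p_i, P*_{−i})) is feasible, one has Σ_{j=1}^J p_{ij} g_i(α_i p_{ij}) ≤ Σ_{j=1}^J p*_{ij} g_i(α*_i p*_{ij}). -/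
open scoped Classical

/-- the hybrid rate control and channel selection game admits a
Nash equilibrium. -/
theorem hybrid_game_nash_exists
    (N J : ℕ) (hN : 1 ≤ N) (hJ : 1 ≤ J)
    (Pw hw : Fin N → Fin J → ℝ) (σ2 : ℝ)
    (hPw : ∀ i j, 0 < Pw i j) (hhw : ∀ i j, 0 < hw i j) (hσ : 0 < σ2)
    (g : Fin N → ℝ → ℝ)
    (hgc : ∀ i, ContinuousOn (g i) (Set.Ici 0))
    (hg : ∀ i, StrictMonoOn (g i) (Set.Ici 0))
    (hgpos : ∀ i x, 0 ≤ x → 0 ≤ g i x)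
    (Cj : Fin J → Finset (Fin N) → ℝ)
    (hCj : ∀ j Ω, Cj j Ω = Real.log (1 + (∑ i ∈ Ω, Pw i j * hw i j) / σ2))
    (Feas : (Fin N → ℝ) → (Fin N → Fin J → ℝ) → Prop)
    (hFeas : ∀ (α : Fin N → ℝ) (Q : Fin N → Fin J → ℝ),
      Feas α Q ↔ ((∀ i, 0 ≤ α i) ∧ (∀ i j, 0 ≤ Q i j) ∧ (∀ i, ∑ j, Q i j = 1) ∧
        ∀ j : Fin J, ∀ Ω : Finset (Fin N), Ω.Nonempty →
          ∑ i ∈ Ω, α i * Q i j ≤ Cj j Ω))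
    :
    ∃ (α : Fin N → ℝ) (Q : Fin N → Fin J → ℝ), Feas α Q ∧
      ∀ (i : Fin N) (ai : ℝ) (pi : Fin J → ℝ),
        0 ≤ ai → (∀ j, 0 ≤ pi j) → (∑ j, pi j) = 1 →
        Feas (Function.update α i ai) (Function.update Q i pi) →
        ∑ j, pi j * g i (ai * pi j) ≤ ∑ j, Q i j * g i (α i * Q i j) := by
  classical
  -- The feasible set
  set F : Set ((Fin N → ℝ) × (Fin N → Fin J → ℝ)) :=
    {x | (∀ i, 0 ≤ x.1 i) ∧ (∀ i j, 0 ≤ x.2 i j) ∧ (∀ i, ∑ j, x.2 i j = 1) ∧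
      ∀ j : Fin J, ∀ Ω : Finset (Fin N), Ω.Nonempty →
        ∑ i ∈ Ω, x.1 i * x.2 i j ≤ Cj j Ω} with hFdef
  have hmem : ∀ x : (Fin N → ℝ) × (Fin N → Fin J → ℝ), x ∈ F ↔ Feas x.1 x.2 := by
    intro x
    rw [hFeas]
    exact Iff.rfl
  have hJ0 : (0:ℝ) < (J : ℝ) := by exact_mod_cast hJ
  -- Nonemptiness of F
  have hCnonneg : ∀ (j : Fin J) (Ω : Finset (Fin N)), 0 ≤ Cj j Ω := by
    intro j Ω
    rw [hCj]
    apply Real.log_nonneg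
    have : 0 ≤ (∑ i ∈ Ω, Pw i j * hw i j) / σ2 := by
      apply div_nonneg _ hσ.le
      exact Finset.sum_nonneg fun i _ => (mul_pos (hPw i j) (hhw i j)).le
    linarith
  have hFne : F.Nonempty := by
    refine ⟨(fun _ => 0, fun _ _ => (J : ℝ)⁻¹), ?_, ?_, ?_, ?_⟩
    · intro i; exact le_refl 0
    · intro i j; positivity
    · intro i
      simp [Finset.sum_const, Finset.card_univ]
      field_simp
    · intro j Ω hΩ
      have : ∑ i ∈ Ω, (0 : ℝ) * (J : ℝ)⁻¹ = 0 := by simp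
      rw [this]
      exact hCnonneg j Ω
  -- F is contained in a compact box
  set B : Fin N → ℝ := fun i => ∑ j, Cj j {i} with hBdef
  have hsub : F ⊆ (Set.Icc (0 : Fin N → ℝ) B) ×ˢ
      (Set.Icc (0 : Fin N → Fin J → ℝ) 1) := by
    rintro ⟨α, Q⟩ ⟨h1, h2, h3, h4⟩
    constructor
    · rw [Set.mem_Icc]
      constructor
      · intro i; exact h1 i
      · intro i
        have hαi : α i = ∑ j, α i * Q i j := by
          rw [← Finset.mul_sum, h3 i, mul_one]
        show α i ≤ ∑ j, Cj j {i}
        rw [hαi]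
        apply Finset.sum_le_sum
        intro j _
        have := h4 j {i} (Finset.singleton_nonempty i)
        simpa using this
    · rw [Set.mem_Icc]
      constructor
      · intro i j; exact h2 i j
      · intro i j
        have : Q i j ≤ ∑ j', Q i j' :=
          Finset.single_le_sum (fun j' _ => h2 i j') (Finset.mem_univ j)
        rw [h3 i] at this
        exact this
  have hKcomp : IsCompact ((Set.Icc (0 : Fin N → ℝ) B) ×ˢ
      (Set.Icc (0 : Fin N → Fin J → ℝ) 1)) :=
    isCompact_Icc.prod isCompact_Icc
  -- F is closed
  have hcont1 : ∀ i : Fin N,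
      Continuous (fun x : (Fin N → ℝ) × (Fin N → Fin J → ℝ) => x.1 i) :=
    fun i => (continuous_apply i).comp continuous_fst
  have hcont2 : ∀ (i : Fin N) (j : Fin J),
      Continuous (fun x : (Fin N → ℝ) × (Fin N → Fin J → ℝ) => x.2 i j) :=
    fun i j => (continuous_apply j).comp ((continuous_apply i).comp continuous_snd)
  have hFclosed : IsClosed F := by
    have hF2 : F = (⋂ i, {x : (Fin N → ℝ) × (Fin N → Fin J → ℝ) | 0 ≤ x.1 i}) ∩
        ((⋂ i, ⋂ j, {x : (Fin N → ℝ) × (Fin N → Fin J → ℝ) | 0 ≤ x.2 i j}) ∩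
        ((⋂ i, {x : (Fin N → ℝ) × (Fin N → Fin J → ℝ) | ∑ j, x.2 i j = 1}) ∩
        (⋂ j, ⋂ Ω : Finset (Fin N),
          {x : (Fin N → ℝ) × (Fin N → Fin J → ℝ) |
            Ω.Nonempty → ∑ i ∈ Ω, x.1 i * x.2 i j ≤ Cj j Ω}))) := by
      ext x
      simp only [hFdef, Set.mem_setOf_eq, Set.mem_inter_iff, Set.mem_iInter]
    rw [hF2]
    refine (isClosed_iInter fun i => ?_).inter
      ((isClosed_iInter fun i => isClosed_iInter fun j => ?_).inter
      ((isClosed_iInter fun i => ?_).inter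
      (isClosed_iInter fun j => isClosed_iInter fun Ω => ?_)))
    · exact isClosed_le continuous_const (hcont1 i)
    · exact isClosed_le continuous_const (hcont2 i j)
    · exact isClosed_eq (continuous_finset_sum _ fun j _ => hcont2 i j) continuous_const
    · by_cases hΩ : Ω.Nonempty
      · have : {x : (Fin N → ℝ) × (Fin N → Fin J → ℝ) |
            Ω.Nonempty → ∑ i ∈ Ω, x.1 i * x.2 i j ≤ Cj j Ω} =
            {x | ∑ i ∈ Ω, x.1 i * x.2 i j ≤ Cj j Ω} := by
          ext x; simp [hΩ]
        rw [this]
        exact isClosed_le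
          (continuous_finset_sum _ fun i _ => (hcont1 i).mul (hcont2 i j))
          continuous_const
      · have : {x : (Fin N → ℝ) × (Fin N → Fin J → ℝ) |
            Ω.Nonempty → ∑ i ∈ Ω, x.1 i * x.2 i j ≤ Cj j Ω} = Set.univ := by
          ext x; simp [hΩ]
        rw [this]
        exact isClosed_univ
  have hFcomp : IsCompact F := hKcomp.of_isClosed_subset hFclosed hsub
  -- Total welfare
  set W : (Fin N → ℝ) × (Fin N → Fin J → ℝ) → ℝ :=
    fun x => ∑ k, ∑ j, x.2 k j * g k (x.1 k * x.2 k j) with hWdef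
  have hWcont : ContinuousOn W F := by
    apply continuousOn_finset_sum
    intro k _
    apply continuousOn_finset_sum
    intro j _
    apply ContinuousOn.mul (hcont2 k j).continuousOn
    apply (hgc k).comp ((hcont1 k).mul (hcont2 k j)).continuousOn
    intro x hx
    exact mul_nonneg (hx.1 k) (hx.2.1 k j)
  obtain ⟨x, hxF, hmax⟩ := hFcomp.exists_isMaxOn hFne hWcont
  refine ⟨x.1, x.2, (hmem x).1 hxF, ?_⟩
  intro i ai pi hai hpi hsum hfeas'
  set x' : (Fin N → ℝ) × (Fin N → Fin J → ℝ) :=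
    (Function.update x.1 i ai, Function.update x.2 i pi) with hx'def
  have hx'F : x' ∈ F := (hmem x').2 hfeas'
  have hW : W x' ≤ W x := hmax hx'F
  -- split the sums at user i
  set T : ((Fin N → ℝ) × (Fin N → Fin J → ℝ)) → Fin N → ℝ :=
    fun y k => ∑ j, y.2 k j * g k (y.1 k * y.2 k j) with hTdef
  have hsplit : ∀ y, W y = T y i + ∑ k ∈ Finset.univ.erase i, T y k := by
    intro y
    exact (Finset.add_sum_erase _ _ (Finset.mem_univ i)).symm
  have hrest : ∑ k ∈ Finset.univ.erase i, T x' k = ∑ k ∈ Finset.univ.erase i, T x k := by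
    apply Finset.sum_congr rfl
    intro k hk
    have hk' : k ≠ i := Finset.ne_of_mem_erase hk
    simp only [hTdef, hx'def, Function.update_of_ne hk']
  have hTi : T x' i ≤ T x i := by
    have h1 := hsplit x'
    have h2 := hsplit x
    rw [h1, h2, hrest] at hW
    linarith
  have hnew : T x' i = ∑ j, pi j * g i (ai * pi j) := by
    simp only [hTdef, hx'def, Function.update_self]
  rw [hnew] at hTi
  exact hTi
end
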